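/- arXiv:2604.21925 — 6 statements merged into one kernel-verified Lean document; each statement's English description precedes it below -/
import Mathlib

section
/- Let A = A^0 ⊕ ⋯ ⊕ A^n be a finite-dimensional commutative graded ℝ-algebra with a degree isomorphism deg_A : A^n → ℝ such that the pairing A^i × A^{n-i} → ℝ, (x,y) ↦ deg_A(xy) is nondegenerate for all i (Poincaré duality). For r ≥ 1 and classes c_i ∈ A^i (1 ≤ i ≤ r), set B = A[ζ]/(ζ^r + c_1 ζ^{r-1} + ⋯ + c_r), graded with ζ in degree 1, with degree map deg_B : B^{n+r-1} → ℝ determined by deg_B(ζ^{r-1} x) = deg_A(x) for x ∈ A^n. Then B satisfies Poincaré duality: for all k, the pairing B^k × B^{n+r-1-k} → ℝ, (x,y) ↦ deg_B(xy), is nondegenerate. -/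
/-!
Write `x ∈ B^k` as `∑_{j<r} ζ^j a_j` with `a_j ∈ A^{k-j}`. The pairing is triangular with respect
to the `ζ`-degree: if `j` is the largest index with `a_j ≠ 0`, then for `y ∈ A^{n-(k-j)}` the
product `x · ζ^{r-1-j} y` equals `ζ^{r-1} a_j y`, because the terms with `m < j` have `A`-degree
above `n`. So `deg_B(x · ζ^{r-1-j} y) = deg_A(a_j y)`, and Poincaré duality in `A` forces
`a_j = 0`. No reduction modulo the defining polynomial is ever needed.
-/

open Polynomial

/-- The polynomial `ζ^r + c_1 ζ^{r-1} + ⋯ + c_r` defining the projective bundle ring. -/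
noncomputable def pbPoly {A : Type*} [CommRing A] (r : ℕ) (c : ℕ → A) : A[X] :=
  X ^ r + ∑ i ∈ Finset.Icc 1 r, C (c i) * X ^ (r - i)

/-- The degree-`k` graded piece of `B = A[ζ]/(ζ^r + c_1 ζ^{r-1} + ⋯ + c_r)`,
spanned by the elements `ζ^i · a` with `i < r`, `i ≤ k`, `a ∈ A^{k-i}`. -/
noncomputable def pbGrade {A : Type*} [CommRing A] [Algebra ℝ A] (𝒜 : ℕ → Submodule ℝ A)
    (r : ℕ) (c : ℕ → A) (k : ℕ) : Submodule ℝ (AdjoinRoot (pbPoly r c)) :=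
  Submodule.span ℝ {b | ∃ i a, i < r ∧ i ≤ k ∧ a ∈ 𝒜 (k - i) ∧
    b = AdjoinRoot.root (pbPoly r c) ^ i * algebraMap A _ a}

theorem mul_eq_zero_of_mem_graded_of_top_lt {R A : Type*} [CommSemiring R] [CommRing A]
    [Module R A] {𝒜 : ℕ → Submodule R A} [SetLike.GradedMonoid 𝒜] {n i j : ℕ}
    (htop : ∀ l, n < l → 𝒜 l = ⊥)
    {x y : A} (hx : x ∈ 𝒜 i) (hy : y ∈ 𝒜 j) (hij : n < i + j) : x * y = 0 := by
  have hxy := SetLike.mul_mem_graded hx hy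
  rwa [htop _ hij, Submodule.mem_bot] at hxy

theorem Nat.forall_eq_zero_of_descending {M : Type*} [Zero M] {a : ℕ → M} {r : ℕ}
    (hr : ∀ j, r ≤ j → a j = 0) (step : ∀ j < r, (∀ m, j < m → a m = 0) → a j = 0) :
    ∀ j, a j = 0 := by
  suffices h : ∀ d j, r ≤ j + d → a j = 0 from fun j => h r j (Nat.le_add_left r j)
  intro d
  induction d with
  | zero => exact hr
  | succ d ih =>
    intro j hj
    by_cases hjd : r ≤ j + d
    · exact ih j hjd
    · exact step j (by omega) fun m hm => ih m (by omega)

theorem sum_pow_mul_mul_pow_mul_eq {B : Type*} [CommRing B] (ζ y : B) (a : ℕ → B) {r j : ℕ}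
    (hj : j < r) (hgt : ∀ m, j < m → a m = 0) (hlt : ∀ m < j, a m * y = 0) :
    (∑ m ∈ Finset.range r, ζ ^ m * a m) * (ζ ^ (r - 1 - j) * y) = ζ ^ (r - 1) * (a j * y) := by
  rw [Finset.sum_mul, Finset.sum_eq_single_of_mem j (Finset.mem_range.2 hj)]
  · rw [← show ζ ^ j * ζ ^ (r - 1 - j) = ζ ^ (r - 1) by rw [← pow_add]; congr 1; omega]
    ring
  · intro m _ hne
    rcases Ne.lt_or_gt hne with hlt' | hgt'
    · linear_combination ζ ^ m * ζ ^ (r - 1 - j) * hlt m hlt'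
    · rw [hgt m hgt', mul_zero, zero_mul]

theorem exists_coeffs_of_mem_pbGrade {A : Type*} [CommRing A] [Algebra ℝ A]
    (𝒜 : ℕ → Submodule ℝ A) (r : ℕ) (c : ℕ → A) {k : ℕ} {x : AdjoinRoot (pbPoly r c)}
    (hx : x ∈ pbGrade 𝒜 r c k) :
    ∃ a : ℕ → A, (∀ j, a j ∈ 𝒜 (k - j)) ∧ (∀ j, k < j → a j = 0) ∧ (∀ j, r ≤ j → a j = 0) ∧
      x = ∑ j ∈ Finset.range r,
        AdjoinRoot.root (pbPoly r c) ^ j * algebraMap A (AdjoinRoot (pbPoly r c)) (a j) := by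
  induction hx using Submodule.span_induction with
  | mem b hb =>
    obtain ⟨i, a, hir, hik, ha, rfl⟩ := hb
    refine ⟨Pi.single i a, fun j => ?_, fun j hj => ?_, fun j hj => ?_, ?_⟩
    · by_cases h : j = i
      · subst h; simpa using ha
      · simp [h]
    · simp [show j ≠ i by omega]
    · simp [show j ≠ i by omega]
    · rw [Finset.sum_eq_single_of_mem i (Finset.mem_range.2 hir)]
      · simp
      · intro m _ hne
        simp [hne]
  | zero => exact ⟨0, by simp, by simp, by simp, by simp⟩
  | add u v _ _ ihu ihv =>
    obtain ⟨a, ha, hak, har, rfl⟩ := ihu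
    obtain ⟨b, hb, hbk, hbr, rfl⟩ := ihv
    refine ⟨a + b, fun j => add_mem (ha j) (hb j), fun j hj => by simp [hak j hj, hbk j hj],
      fun j hj => by simp [har j hj, hbr j hj], ?_⟩
    simp only [Pi.add_apply, map_add, mul_add, Finset.sum_add_distrib]
  | smul t u _ ihu =>
    obtain ⟨a, ha, hak, har, rfl⟩ := ihu
    refine ⟨t • a, fun j => Submodule.smul_mem _ t (ha j), fun j hj => by simp [hak j hj],
      fun j hj => by simp [har j hj], ?_⟩
    simp only [Finset.smul_sum, Pi.smul_apply, ← IsScalarTower.toAlgHom_apply ℝ, map_smul,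
      mul_smul_comm]

theorem stmt0_general {A : Type*} [CommRing A] [Algebra ℝ A]
    (𝒜 : ℕ → Submodule ℝ A) [GradedAlgebra 𝒜]
    (n : ℕ) (htop : ∀ j, n < j → 𝒜 j = ⊥)
    (degA : A →ₗ[ℝ] ℝ)
    (hPD : ∀ i, ∀ x ∈ 𝒜 i, (∀ y ∈ 𝒜 (n - i), degA (x * y) = 0) → x = 0)
    (r : ℕ)
    (c : ℕ → A)
    (degB : AdjoinRoot (pbPoly r c) →ₗ[ℝ] ℝ)
    (hdegB : ∀ x ∈ 𝒜 n,
      degB (AdjoinRoot.root (pbPoly r c) ^ (r - 1) * algebraMap A _ x) = degA x) :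
    ∀ k ≤ n + r - 1, ∀ x ∈ pbGrade 𝒜 r c k,
      (∀ y ∈ pbGrade 𝒜 r c (n + r - 1 - k), degB (x * y) = 0) → x = 0 := by
  intro k hk x hx hpair
  obtain ⟨a, ha, hak, har, rfl⟩ := exists_coeffs_of_mem_pbGrade 𝒜 r c hx
  set ζ := AdjoinRoot.root (pbPoly r c)
  set φ := algebraMap A (AdjoinRoot (pbPoly r c))
  suffices h : ∀ j, a j = 0 by simp [h]
  refine Nat.forall_eq_zero_of_descending har fun j hjr hgt => ?_
  by_cases hjk : k < j
  · exact hak j hjk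
  by_cases hkn : n < k - j
  · simpa [htop _ hkn] using ha j
  refine hPD (k - j) (a j) (ha j) fun y hy => ?_
  have hζy : ζ ^ (r - 1 - j) * φ y ∈ pbGrade 𝒜 r c (n + r - 1 - k) :=
    Submodule.subset_span ⟨r - 1 - j, y, by omega, by omega,
      by rwa [show n + r - 1 - k - (r - 1 - j) = n - (k - j) by omega], rfl⟩
  have hprod := sum_pow_mul_mul_pow_mul_eq ζ (φ y) (fun m => φ (a m)) hjr
    (fun m hm => by simp [hgt m hm]) fun m hm => by
      rw [← map_mul, mul_eq_zero_of_mem_graded_of_top_lt htop (ha m) hy (by omega), map_zero]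
  have hay : a j * y ∈ 𝒜 n := by
    simpa [show k - j + (n - (k - j)) = n by omega] using SetLike.mul_mem_graded (ha j) hy
  have := hpair _ hζy
  rwa [hprod, ← map_mul, hdegB _ hay] at this

/-- If `A` is a finite-dimensional graded commutative `ℝ`-algebra with top
degree `n` satisfying Poincaré duality with respect to `deg_A`, then the projective bundle ring
`B = A[ζ]/(ζ^r + c_1 ζ^{r-1} + ⋯ + c_r)` satisfies Poincaré duality with respect to the degree
map `deg_B` determined by `deg_B(ζ^{r-1} x) = deg_A x` for `x ∈ A^n`. -/
theorem stmt0 {A : Type*} [CommRing A] [Algebra ℝ A] [FiniteDimensional ℝ A]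
    (𝒜 : ℕ → Submodule ℝ A) [GradedAlgebra 𝒜]
    (n : ℕ) (htop : ∀ j, n < j → 𝒜 j = ⊥)
    (degA : A →ₗ[ℝ] ℝ) (hdegA : Function.Bijective (degA.comp (𝒜 n).subtype))
    (hPD : ∀ i, ∀ x ∈ 𝒜 i, (∀ y ∈ 𝒜 (n - i), degA (x * y) = 0) → x = 0)
    (r : ℕ) (hr : 1 ≤ r)
    (c : ℕ → A) (hc : ∀ i, 1 ≤ i → i ≤ r → c i ∈ 𝒜 i)
    (degB : AdjoinRoot (pbPoly r c) →ₗ[ℝ] ℝ)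
    (hdegB : ∀ x ∈ 𝒜 n,
      degB (AdjoinRoot.root (pbPoly r c) ^ (r - 1) * algebraMap A _ x) = degA x) :
    ∀ k ≤ n + r - 1, ∀ x ∈ pbGrade 𝒜 r c k,
      (∀ y ∈ pbGrade 𝒜 r c (n + r - 1 - k), degB (x * y) = 0) → x = 0 :=
  stmt0_general 𝒜 n htop degA hPD r c degB hdegB
end

section
/- Let A = A^0 ⊕ ⋯ ⊕ A^n be a finite-dimensional commutative graded ℝ-algebra satisfying Poincaré duality with respect to deg_A : A^n → ℝ. Let c_i ∈ A^i for 1 ≤ i ≤ r and B = A[ζ]/(ζ^r + c_1 ζ^{r-1} + ⋯ + c_r). Suppose that for each i the multiplication map B^i → B^{i+1}, x ↦ ζx, has full rank (i.e., is injective for i < (n+r-1)/2 and surjective for i ≥ (n+r-1)/2, equivalently has maximal rank). Assume r ≤ n. Then multiplication by c_r gives an injective map A^i → A^{i+r} for all i ≤ (n−r)/2. -/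
open Polynomial

/-!
Write `ζ` for the root of `p = ζ^r + c_1 ζ^{r-1} + ⋯ + c_r` and let `x ∈ A^i` with `c_r x = 0`.
The class `b = x (ζ^{r-1} + c_1 ζ^{r-2} + ⋯ + c_{r-1}) ∈ B^{i+r-1}` satisfies `ζ b = -c_r x = 0`,
and `i + r - 1` lies below the middle degree, so `b = 0`. But `b` is represented by a polynomial
of degree `< r` with leading coefficient `x`, which the monic `p` can only divide if `x = 0`.
-/

section pbPoly

variable {A : Type*} [CommRing A] (c : ℕ → A)

lemma degree_sum_C_mul_X_pow_sub_lt (r : ℕ) :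
    (∑ i ∈ Finset.Icc 1 r, C (c i) * X ^ (r - i)).degree < (r : WithBot ℕ) := by
  refine (degree_sum_le _ _).trans_lt ((Finset.sup_lt_iff (WithBot.bot_lt_coe r)).2 ?_)
  intro i hi
  obtain ⟨hi1, hir⟩ := Finset.mem_Icc.1 hi
  exact (degree_C_mul_X_pow_le _ _).trans_lt (WithBot.coe_lt_coe.2 (show r - i < r by omega))

lemma pbPoly_monic (r : ℕ) : (pbPoly r c).Monic :=
  monic_X_pow_add (degree_sum_C_mul_X_pow_sub_lt c r)

lemma natDegree_pbPoly [Nontrivial A] (r : ℕ) : (pbPoly r c).natDegree = r := by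
  rw [pbPoly, natDegree_add_eq_left_of_degree_lt, natDegree_X_pow]
  simpa using degree_sum_C_mul_X_pow_sub_lt c r

lemma X_mul_pbPoly_add_C (m : ℕ) : X * pbPoly m c + C (c (m + 1)) = pbPoly (m + 1) c := by
  rw [pbPoly, pbPoly, ← Finset.insert_Icc_right_eq_Icc_add_one (by omega),
    Finset.sum_insert (by simp), Nat.sub_self, pow_zero, mul_one, mul_add, Finset.mul_sum,
    ← pow_succ']
  have hshift : ∀ i ∈ Finset.Icc 1 m,
      X * (C (c i) * X ^ (m - i)) = C (c i) * X ^ (m + 1 - i) := by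
    intro i hi
    rw [mul_left_comm, ← pow_succ', Nat.sub_add_comm (Finset.mem_Icc.1 hi).2]
  rw [Finset.sum_congr rfl hshift]
  ring

lemma root_mul_mk_pbPoly (m : ℕ) :
    AdjoinRoot.root (pbPoly (m + 1) c) * AdjoinRoot.mk _ (pbPoly m c) =
      -AdjoinRoot.of _ (c (m + 1)) := by
  rw [eq_neg_iff_add_eq_zero, ← AdjoinRoot.mk_X, ← map_mul, ← AdjoinRoot.mk_C, ← map_add,
    X_mul_pbPoly_add_C, AdjoinRoot.mk_self]

lemma eq_zero_of_mk_C_mul_pbPoly_eq_zero {m : ℕ} {x : A}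
    (hx : AdjoinRoot.mk (pbPoly (m + 1) c) (C x * pbPoly m c) = 0) : x = 0 := by
  nontriviality A
  have hq : C x * pbPoly m c = 0 := by
    by_contra hq
    refine (pbPoly_monic c (m + 1)).not_dvd_of_natDegree_lt hq ?_ (AdjoinRoot.mk_eq_zero.1 hx)
    refine natDegree_C_mul_le _ _ |>.trans_lt ?_
    rw [natDegree_pbPoly, natDegree_pbPoly]
    omega
  have hlead : (pbPoly m c).coeff m = 1 := by
    simpa [natDegree_pbPoly] using (pbPoly_monic c m).coeff_natDegree
  simpa [hlead] using congrArg (coeff · m) hq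

end pbPoly

section pbGrade

variable {A : Type*} [CommRing A] [Algebra ℝ A] (𝒜 : ℕ → Submodule ℝ A) (c : ℕ → A)

lemma root_pow_mul_mem_pbGrade {r j k : ℕ} {a : A} (hjr : j < r) (hjk : j ≤ k)
    (ha : a ∈ 𝒜 (k - j)) :
    AdjoinRoot.root (pbPoly r c) ^ j * algebraMap A _ a ∈ pbGrade 𝒜 r c k :=
  Submodule.subset_span ⟨j, a, hjr, hjk, ha, rfl⟩

lemma mk_C_mul_pbPoly_mem_pbGrade [SetLike.GradedMul 𝒜] {m i : ℕ}
    (hc : ∀ j, 1 ≤ j → j ≤ m → c j ∈ 𝒜 j) {x : A} (hx : x ∈ 𝒜 i) :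
    AdjoinRoot.mk (pbPoly (m + 1) c) (C x * pbPoly m c) ∈ pbGrade 𝒜 (m + 1) c (i + m) := by
  rw [show pbPoly m c = X ^ m + ∑ j ∈ Finset.Icc 1 m, C (c j) * X ^ (m - j) from rfl, mul_add,
    Finset.mul_sum, map_add, map_sum]
  refine Submodule.add_mem _ ?_ (Submodule.sum_mem _ fun j hj ↦ ?_)
  · rw [map_mul, map_pow, AdjoinRoot.mk_C, AdjoinRoot.mk_X, mul_comm]
    exact root_pow_mul_mem_pbGrade 𝒜 c (by omega) (by omega) (by simpa using hx)
  · obtain ⟨hj1, hjm⟩ := Finset.mem_Icc.1 hj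
    have hmem : c j * x ∈ 𝒜 (i + m - (m - j)) := by
      rw [show i + m - (m - j) = j + i by omega]
      exact SetLike.mul_mem_graded (hc j hj1 hjm) hx
    have hterm : AdjoinRoot.mk (pbPoly (m + 1) c) (C x * (C (c j) * X ^ (m - j))) =
        AdjoinRoot.root _ ^ (m - j) * algebraMap A _ (c j * x) := by
      simp only [map_mul, map_pow, AdjoinRoot.mk_C, AdjoinRoot.mk_X, AdjoinRoot.algebraMap_eq]
      ring
    rw [hterm]
    exact root_pow_mul_mem_pbGrade 𝒜 c (by omega) (by omega) hmem

end pbGrade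

theorem stmt1_general {A : Type*} [CommRing A] [Algebra ℝ A]
    (𝒜 : ℕ → Submodule ℝ A) [GradedAlgebra 𝒜]
    (n : ℕ)
    (r : ℕ) (hr1 : 1 ≤ r) (hrn : r ≤ n)
    (c : ℕ → A) (hc : ∀ i, 1 ≤ i → i ≤ r → c i ∈ 𝒜 i)
    (hζinj : ∀ k, 2 * k < n + r - 1 → ∀ x ∈ pbGrade 𝒜 r c k,
      AdjoinRoot.root (pbPoly r c) * x = 0 → x = 0) :
    ∀ i, 2 * i ≤ n - r → ∀ x ∈ 𝒜 i, c r * x = 0 → x = 0 := by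
  intro i hi x hx hcx
  obtain ⟨m, rfl⟩ : ∃ m, r = m + 1 := ⟨r - 1, by omega⟩
  refine eq_zero_of_mk_C_mul_pbPoly_eq_zero c (hζinj (i + m) (by omega) _
    (mk_C_mul_pbPoly_mem_pbGrade 𝒜 c (fun j hj hjm ↦ hc j hj (by omega)) hx) ?_)
  rw [map_mul, AdjoinRoot.mk_C, mul_left_comm, root_mul_mk_pbPoly, mul_neg, ← map_mul,
    mul_comm, hcx, map_zero, neg_zero]

/-- Bloch–Gieseker-type injectivity. If multiplication by `ζ` has full rank
`B^i → B^{i+1}` in every degree (injective below the middle, surjective at or above), and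
`r ≤ n`, then multiplication by `c_r : A^i → A^{i+r}` is injective for all `i ≤ (n-r)/2`. -/
theorem stmt1 {A : Type*} [CommRing A] [Algebra ℝ A] [FiniteDimensional ℝ A]
    (𝒜 : ℕ → Submodule ℝ A) [GradedAlgebra 𝒜]
    (n : ℕ) (htop : ∀ j, n < j → 𝒜 j = ⊥)
    (degA : A →ₗ[ℝ] ℝ)
    (hPD : ∀ i, ∀ x ∈ 𝒜 i, (∀ y ∈ 𝒜 (n - i), degA (x * y) = 0) → x = 0)
    (r : ℕ) (hr1 : 1 ≤ r) (hrn : r ≤ n)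
    (c : ℕ → A) (hc : ∀ i, 1 ≤ i → i ≤ r → c i ∈ 𝒜 i)
    (hζinj : ∀ k, 2 * k < n + r - 1 → ∀ x ∈ pbGrade 𝒜 r c k,
      AdjoinRoot.root (pbPoly r c) * x = 0 → x = 0)
    (hζsurj : ∀ k, n + r - 1 ≤ 2 * k → ∀ y ∈ pbGrade 𝒜 r c (k + 1),
      ∃ x ∈ pbGrade 𝒜 r c k, AdjoinRoot.root (pbPoly r c) * x = y) :
    ∀ i, 2 * i ≤ n - r → ∀ x ∈ 𝒜 i, c r * x = 0 → x = 0 :=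
  stmt1_general 𝒜 n r hr1 hrn c hc hζinj
end

section
/- Let A be a commutative graded ℝ-algebra, B = A[ζ]/(ζ^r + c_1 ζ^{r-1} + ⋯ + c_r), and define s_i by (1 + c_1 + ⋯ + c_r)(1 + s_1 + s_2 + ⋯) = 1. If s_j = 0 in A for all j > t, then ζ^{t+r} = 0 in B. -/
open Polynomial

section Aux
variable {A : Type*} [CommRing A] (r : ℕ) (c s : ℕ → A)

/-- extended coefficient sequence: `c' 0 = 1`, `c' j = c j` for `1 ≤ j ≤ r`, `0` past `r`. -/
def cAux (j : ℕ) : A := if j = 0 then 1 else if j ≤ r then c j else 0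

/-- `v m = ∑_{i=0}^m s_i ζ^{m-i}` in `B`. -/
noncomputable def vAux (m : ℕ) : AdjoinRoot (pbPoly r c) :=
  ∑ i ∈ Finset.range (m + 1),
    algebraMap A (AdjoinRoot (pbPoly r c)) (s i) * AdjoinRoot.root (pbPoly r c) ^ (m - i)

lemma cAux_zero : cAux r c 0 = (1 : A) := rfl

lemma cAux_of_gt {j : ℕ} (h : r < j) : cAux r c j = 0 := by
  unfold cAux; rw [if_neg (by omega), if_neg (by omega)]

lemma cAux_of_mid {j : ℕ} (h1 : 1 ≤ j) (h2 : j ≤ r) : cAux r c j = c j := by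
  unfold cAux; rw [if_neg (by omega), if_pos h2]

lemma range_succ_eq_insert (i : ℕ) : Finset.range (i + 1) = insert 0 (Finset.Icc 1 i) := by
  ext x; simp; omega

lemma cAux_conv (hs : ∀ i, 1 ≤ i → s i + ∑ j ∈ Finset.Icc 1 (min i r), c j * s (i - j) = 0)
    {i : ℕ} (hi : 1 ≤ i) :
    ∑ j ∈ Finset.range (i + 1), cAux r c j * s (i - j) = 0 := by
  rw [range_succ_eq_insert, Finset.sum_insert (by simp)]
  have h1 : ∑ j ∈ Finset.Icc 1 i, cAux r c j * s (i - j)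
      = ∑ j ∈ Finset.Icc 1 (min i r), c j * s (i - j) := by
    rw [← Finset.sum_subset (Finset.Icc_subset_Icc_right (min_le_left i r))]
    · apply Finset.sum_congr rfl
      intro j hj
      simp only [Finset.mem_Icc] at hj
      rw [cAux_of_mid r c hj.1 (le_trans hj.2 (min_le_right i r))]
    · intro j hj hj'
      simp only [Finset.mem_Icc] at hj hj'
      rw [cAux_of_gt r c (by omega), zero_mul]
  rw [h1, cAux_zero, one_mul, Nat.sub_zero]
  exact hs i hi

lemma vAux_zero (hs0 : s 0 = 1) : vAux r c s 0 = 1 := by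
  simp [vAux, hs0]

lemma vAux_succ (m : ℕ) :
    vAux r c s (m + 1) = AdjoinRoot.root (pbPoly r c) * vAux r c s m
      + algebraMap A (AdjoinRoot (pbPoly r c)) (s (m + 1)) := by
  rw [vAux, Finset.sum_range_succ, Nat.sub_self, pow_zero, mul_one]
  congr 1
  rw [vAux, Finset.mul_sum]
  apply Finset.sum_congr rfl
  intro i hi
  simp only [Finset.mem_range] at hi
  have h : m + 1 - i = (m - i) + 1 := by omega
  rw [h, pow_succ]
  ring

lemma key (hs0 : s 0 = 1)
    (hs : ∀ i, 1 ≤ i → s i + ∑ j ∈ Finset.Icc 1 (min i r), c j * s (i - j) = 0)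
    (m : ℕ) :
    AdjoinRoot.root (pbPoly r c) ^ m
      = ∑ j ∈ Finset.range (m + 1),
          algebraMap A (AdjoinRoot (pbPoly r c)) (cAux r c j) * vAux r c s (m - j) := by
  induction m with
  | zero => simp [cAux_zero, vAux_zero r c s hs0]
  | succ m ih =>
    have step : AdjoinRoot.root (pbPoly r c) ^ (m + 1)
        = ∑ j ∈ Finset.range (m + 1),
            algebraMap A (AdjoinRoot (pbPoly r c)) (cAux r c j)
              * (vAux r c s (m + 1 - j)
                - algebraMap A (AdjoinRoot (pbPoly r c)) (s (m + 1 - j))) := by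
      rw [pow_succ, ih, Finset.sum_mul]
      apply Finset.sum_congr rfl
      intro j hj
      simp only [Finset.mem_range] at hj
      have h : m + 1 - j = (m - j) + 1 := by omega
      rw [h, vAux_succ]
      ring
    rw [step]
    simp only [mul_sub, Finset.sum_sub_distrib]
    have hzero : ∑ j ∈ Finset.range (m + 2),
        algebraMap A (AdjoinRoot (pbPoly r c)) (cAux r c j * s (m + 1 - j)) = 0 := by
      rw [← map_sum, cAux_conv r c s hs (by omega), map_zero]
    rw [Finset.sum_range_succ] at hzero
    have h2 : ∑ j ∈ Finset.range (m + 1),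
        algebraMap A (AdjoinRoot (pbPoly r c)) (cAux r c j)
          * algebraMap A (AdjoinRoot (pbPoly r c)) (s (m + 1 - j))
        = - algebraMap A (AdjoinRoot (pbPoly r c)) (cAux r c (m + 1) * s 0) := by
      have := hzero
      simp only [map_mul, Nat.add_sub_cancel_left] at this ⊢
      have h3 : m + 1 - (m + 1) = 0 := by omega
      rw [h3] at this
      linear_combination this
    rw [h2, sub_neg_eq_add, Finset.sum_range_succ _ (m + 1)]
    congr 1
    rw [map_mul, hs0, map_one, mul_one, Nat.sub_self, vAux_zero r c s hs0, mul_one]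

end Aux

lemma vAux_shift {A : Type*} [CommRing A] (r : ℕ) (c s : ℕ → A)
    (t : ℕ) (hvan : ∀ j, t < j → s j = 0) (k : ℕ) :
    vAux r c s (t + k) = AdjoinRoot.root (pbPoly r c) ^ k * vAux r c s t := by
  induction k with
  | zero => simp
  | succ k ih =>
    have h : t + (k + 1) = (t + k) + 1 := by omega
    rw [h, vAux_succ, ih, hvan (t + k + 1) (by omega), map_zero, add_zero, pow_succ]
    ring

lemma root_rel {A : Type*} [CommRing A] (r : ℕ) (c : ℕ → A) :
    AdjoinRoot.root (pbPoly r c) ^ r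
      + ∑ j ∈ Finset.Icc 1 r, algebraMap A (AdjoinRoot (pbPoly r c)) (c j)
          * AdjoinRoot.root (pbPoly r c) ^ (r - j) = 0 := by
  have h := AdjoinRoot.eval₂_root (pbPoly r c)
  rw [pbPoly] at h
  simp [eval₂_finset_sum, AdjoinRoot.algebraMap_eq] at h ⊢
  exact h


/-- With Segre classes `s_i` defined by `(1 + c_1 + ⋯ + c_r)(1 + s_1 + ⋯) = 1`,
if `s_j = 0` for all `j > t`, then `ζ^{t+r} = 0` in `B = A[ζ]/(ζ^r + c_1 ζ^{r-1} + ⋯ + c_r)`. -/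
theorem stmt5 {A : Type*} [CommRing A]
    (r : ℕ) (hr : 1 ≤ r) (c : ℕ → A)
    (s : ℕ → A) (hs0 : s 0 = 1)
    (hs : ∀ i, 1 ≤ i → s i + ∑ j ∈ Finset.Icc 1 (min i r), c j * s (i - j) = 0)
    (t : ℕ) (hvan : ∀ j, t < j → s j = 0) :
    AdjoinRoot.root (pbPoly r c) ^ (t + r) = 0 := by
  rw [key r c s hs0 hs (t + r)]
  rw [← Finset.sum_subset (Finset.range_subset_range.2 (by omega : r + 1 ≤ t + r + 1))
    (by
      intro j hj hj'
      simp only [Finset.mem_range] at hj hj'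
      rw [cAux_of_gt r c (by omega), map_zero, zero_mul])]
  have h1 : ∑ j ∈ Finset.range (r + 1),
      algebraMap A (AdjoinRoot (pbPoly r c)) (cAux r c j) * vAux r c s (t + r - j)
      = (∑ j ∈ Finset.range (r + 1),
          algebraMap A (AdjoinRoot (pbPoly r c)) (cAux r c j)
            * AdjoinRoot.root (pbPoly r c) ^ (r - j)) * vAux r c s t := by
    rw [Finset.sum_mul]
    apply Finset.sum_congr rfl
    intro j hj
    simp only [Finset.mem_range] at hj
    have h : t + r - j = t + (r - j) := by omega
    rw [h, vAux_shift r c s t hvan]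
    ring
  rw [h1]
  have h2 : ∑ j ∈ Finset.range (r + 1),
      algebraMap A (AdjoinRoot (pbPoly r c)) (cAux r c j)
        * AdjoinRoot.root (pbPoly r c) ^ (r - j) = 0 := by
    rw [range_succ_eq_insert, Finset.sum_insert (by simp), cAux_zero, map_one, one_mul,
      Nat.sub_zero]
    rw [← root_rel r c]
    congr 1
    apply Finset.sum_congr rfl
    intro j hj
    simp only [Finset.mem_Icc] at hj
    rw [cAux_of_mid r c hj.1 hj.2]
  rw [h2, zero_mul]
end

section
/- Let M be a loopless matroid of rank r on [N], and let S|F < T|G be a lexicographically decreasing biflag of M whose second component has length ℓ = rk(S̄_s^c) − 1 = a − 1. Then the sets ∅ = S̄_s^c ∩ G_a ⊂ S̄_s^c ∩ G_{a−1} ⊂ ⋯ ⊂ S̄_s^c ∩ G_1 ⊂ S̄_s^c form a strictly increasing saturated chain of flats of M (each inclusion is strict and increases rank by exactly one). -/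
/-- The rank of a set in a matroid: the largest cardinality of an independent subset. -/
noncomputable def mrk {N : ℕ} (M : Matroid (Fin N)) (X : Set (Fin N)) : ℕ :=
  sSup {n | ∃ I ⊆ X, M.Indep I ∧ I.ncard = n}

/-- A biflag of a matroid `M` on `[N]`, written `S|F < T|G` where `s` is its smallest gap
index: a strict chain of proper biflats `U 1|V 1 < ⋯ < U (s+l)|V (s+l)` (the first `s` of
them forming the first component and the last `l` the second component), with the conventions
`U 0|V 0 = ∅|[N]` and `U (s+l+1)|V (s+l+1) = [N]|∅`, such that `s` is a gap index and no
index `j < s` is a gap index. -/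
structure Biflag (N : ℕ) (M : Matroid (Fin N)) where
  s : ℕ
  l : ℕ
  U : ℕ → Set (Fin N)
  V : ℕ → Set (Fin N)
  conv_zero : U 0 = ∅ ∧ V 0 = Set.univ
  conv_top : U (s + l + 1) = Set.univ ∧ V (s + l + 1) = ∅
  biflat : ∀ i, 1 ≤ i → i ≤ s + l → U i ∪ V i = Set.univ ∧ U i ∩ V i ≠ Set.univ ∧
    (U i).Nonempty ∧ (V i).Nonempty ∧ M.IsFlat (V i)
  chain_mono : ∀ i, i ≤ s + l → U i ⊆ U (i + 1) ∧ V (i + 1) ⊆ V i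
  chain_strict : ∀ i, 1 ≤ i → i < s + l → (U i, V i) ≠ (U (i + 1), V (i + 1))
  gap_at_s : U s ∪ V (s + 1) ≠ Set.univ
  min_gap : ∀ j, j < s → U j ∪ V (j + 1) = Set.univ

/-- A biflag `S|F < T|G` is lexicographically decreasing if for each `0 ≤ i ≤ ℓ` we have
`min(cl(S_s^c) ∖ G_{i+1}) ∈ G_i`, where `G_i = V (s+i)`. -/
def Biflag.LexDec {N : ℕ} {M : Matroid (Fin N)} (D : Biflag N M) : Prop :=
  ∀ i ≤ D.l, ∀ e : Fin N,
    IsLeast (M.closure ((D.U D.s)ᶜ) \ D.V (D.s + i + 1)) e → e ∈ D.V (D.s + i)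


namespace MyAux

variable {N : ℕ} {M : Matroid (Fin N)}

lemma mrk_bdd (X : Set (Fin N)) : BddAbove {n | ∃ I ⊆ X, M.Indep I ∧ I.ncard = n} := by
  refine ⟨N, ?_⟩
  rintro n ⟨I, -, -, rfl⟩
  calc I.ncard ≤ (Set.univ : Set (Fin N)).ncard :=
        Set.ncard_le_ncard (Set.subset_univ I) Set.finite_univ
    _ = N := by simp [Set.ncard_univ]

lemma mrk_nonempty (X : Set (Fin N)) :
    {n | ∃ I ⊆ X, M.Indep I ∧ I.ncard = n}.Nonempty :=
  ⟨0, ∅, Set.empty_subset X, M.empty_indep, Set.ncard_empty _⟩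

lemma le_mrk {I X : Set (Fin N)} (hIX : I ⊆ X) (hI : M.Indep I) : I.ncard ≤ mrk M X :=
  le_csSup (mrk_bdd X) ⟨I, hIX, hI, rfl⟩

lemma mrk_eq_of_basis {I X : Set (Fin N)} (hI : M.IsBasis I X) : mrk M X = I.ncard := by
  refine le_antisymm (csSup_le (mrk_nonempty X) ?_) (le_mrk hI.subset hI.indep)
  rintro n ⟨J, hJX, hJ, rfl⟩
  obtain ⟨J', hJ', hJJ'⟩ := hJ.subset_isBasis_of_subset hJX hI.subset_ground
  have hcard : J'.ncard = I.ncard := by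
    rw [Set.ncard_def, Set.ncard_def, hJ'.encard_eq_encard hI]
  calc J.ncard ≤ J'.ncard := Set.ncard_le_ncard hJJ' (Set.toFinite J')
    _ = I.ncard := hcard

lemma mrk_empty : mrk M (∅ : Set (Fin N)) = 0 := by
  rw [mrk_eq_of_basis (M.empty_indep.isBasis_self), Set.ncard_empty]

lemma flat_closure (X : Set (Fin N)) : M.IsFlat (M.closure X) := by
  rw [Matroid.closure_def]
  have hne : Nonempty {F : Set (Fin N) // M.IsFlat F ∧ X ∩ M.E ⊆ F} :=
    ⟨⟨M.E, M.ground_isFlat, Set.inter_subset_right⟩⟩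
  have : ⋂₀ {F | M.IsFlat F ∧ X ∩ M.E ⊆ F} =
      ⋂ F : {F : Set (Fin N) // M.IsFlat F ∧ X ∩ M.E ⊆ F}, (F : Set (Fin N)) := by
    ext x; simp [Set.mem_sInter]
  rw [this]
  exact Matroid.IsFlat.iInter fun F => F.2.1

lemma flat_inter {F₁ F₂ : Set (Fin N)} (h₁ : M.IsFlat F₁) (h₂ : M.IsFlat F₂) :
    M.IsFlat (F₁ ∩ F₂) := by
  have : F₁ ∩ F₂ = ⋂ b : Bool, (if b then F₁ else F₂) := by
    ext x
    simp only [Set.mem_iInter, Bool.forall_bool, if_true, if_false, Set.mem_inter_iff]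
    tauto
  rw [this]
  exact Matroid.IsFlat.iInter (by rintro (_|_) <;> simp [*])

lemma mrk_lt_of_flat_ssubset {F X : Set (Fin N)} (hF : M.IsFlat F) (hss : F ⊂ X)
    (hX : X ⊆ M.E) : mrk M F < mrk M X := by
  obtain ⟨I, hI⟩ := M.exists_isBasis F hF.subset_ground
  obtain ⟨x, hxX, hxF⟩ := Set.exists_of_ssubset hss
  have hxI : x ∉ I := fun h => hxF (hI.subset h)
  have hxcl : x ∉ M.closure I := by
    rw [hI.closure_eq_closure, hF.closure]; exact hxF
  have hins : M.Indep (insert x I) := by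
    rw [hI.indep.insert_indep_iff_of_notMem hxI]
    exact ⟨hX hxX, hxcl⟩
  have hsub : insert x I ⊆ X := Set.insert_subset hxX (hI.subset.trans hss.subset)
  calc mrk M F = I.ncard := mrk_eq_of_basis hI
    _ < (insert x I).ncard := by
        rw [Set.ncard_insert_of_notMem hxI (Set.toFinite I)]; omega
    _ ≤ mrk M X := le_mrk hsub hins

end MyAux

section Main

namespace MyAux

variable {N : ℕ} {M : Matroid (Fin N)}

noncomputable def Wset (D : Biflag N M) (i : ℕ) : Set (Fin N) :=
  if i = 0 then M.closure ((D.U D.s)ᶜ) else M.closure ((D.U D.s)ᶜ) ∩ D.V (D.s + i)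

lemma Wset_zero (D : Biflag N M) : Wset D 0 = M.closure ((D.U D.s)ᶜ) := if_pos rfl

lemma Wset_pos (D : Biflag N M) {i : ℕ} (hi : i ≠ 0) :
    Wset D i = M.closure ((D.U D.s)ᶜ) ∩ D.V (D.s + i) := if_neg hi

end MyAux

end Main


/-- Let `M` be a loopless matroid and `S|F < T|G` a lexicographically
decreasing biflag of `M` whose second component has length `ℓ = rk(cl(S_s^c)) − 1 = a − 1`.
Then `∅ = cl(S_s^c) ∩ G_a ⊂ cl(S_s^c) ∩ G_{a−1} ⊂ ⋯ ⊂ cl(S_s^c) ∩ G_1 ⊂ cl(S_s^c)` is a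
strictly increasing saturated chain of flats: each `cl(S_s^c) ∩ G_i` is a flat of rank `a − i`,
each inclusion is strict, and each step raises the rank by exactly one. -/
theorem stmt8 {N : ℕ} (M : Matroid (Fin N)) (hE : M.E = Set.univ)
    (hloopless : ∀ e : Fin N, M.Indep {e})
    (D : Biflag N M) (hlex : D.LexDec)
    (a : ℕ) (ha : a = mrk M (M.closure ((D.U D.s)ᶜ))) (ha1 : 1 ≤ a)
    (hl : D.l = a - 1) :
    (M.closure ((D.U D.s)ᶜ) ∩ D.V (D.s + a) = ∅) ∧
    (∀ i, 1 ≤ i → i ≤ a →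
      M.IsFlat (M.closure ((D.U D.s)ᶜ) ∩ D.V (D.s + i)) ∧
      mrk M (M.closure ((D.U D.s)ᶜ) ∩ D.V (D.s + i)) = a - i) ∧
    (∀ i, 1 ≤ i → i < a →
      M.closure ((D.U D.s)ᶜ) ∩ D.V (D.s + i + 1) ⊂
        M.closure ((D.U D.s)ᶜ) ∩ D.V (D.s + i)) ∧
    M.closure ((D.U D.s)ᶜ) ∩ D.V (D.s + 1) ⊂ M.closure ((D.U D.s)ᶜ) := by
  classical
  have hsubE : ∀ X : Set (Fin N), X ⊆ M.E := fun X => hE ▸ Set.subset_univ X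
  have hal : a = D.l + 1 := by omega
  -- monotonicity of the V chain
  have hVmono : ∀ j k, j + k ≤ D.s + D.l + 1 → D.V (j + k) ⊆ D.V j := by
    intro j k
    induction k with
    | zero => intro _; exact subset_rfl
    | succ k ih =>
      intro h
      exact ((D.chain_mono (j + k) (by omega)).2).trans (ih (by omega))
  -- the top of the chain is empty
  have hVempty : D.V (D.s + a) = ∅ := by
    rw [hal, ← Nat.add_assoc]; exact D.conv_top.2
  -- a witness outside U s ∪ V (s+1)
  obtain ⟨x, hxU, hxV⟩ : ∃ x, x ∉ D.U D.s ∧ x ∉ D.V (D.s + 1) := by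
    by_contra h
    push_neg at h
    exact D.gap_at_s (Set.eq_univ_of_forall fun y => by
      by_cases hy : y ∈ D.U D.s
      · exact Or.inl hy
      · exact Or.inr (h y hy))
  have hxC : x ∈ M.closure ((D.U D.s)ᶜ) := M.subset_closure _ (hsubE _) hxU
  -- the closure is never contained in V (s+i) for 1 ≤ i
  have hnotsub : ∀ i, 1 ≤ i → i ≤ a → ¬ M.closure ((D.U D.s)ᶜ) ⊆ D.V (D.s + i) := by
    intro i h1 h2 hsub
    have he : D.s + i = (D.s + 1) + (i - 1) := by omega
    have := hVmono (D.s + 1) (i - 1) (by omega)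
    rw [← he] at this
    exact hxV (this (hsub hxC))
  -- strict inclusions
  have hWstrict : ∀ i < a, MyAux.Wset D (i + 1) ⊂ MyAux.Wset D i := by
    intro i hia
    have hTne : (M.closure ((D.U D.s)ᶜ) \ D.V (D.s + i + 1)).Nonempty := by
      obtain ⟨y, hyC, hyV⟩ := Set.not_subset.1 (hnotsub (i + 1) (by omega) (by omega))
      exact ⟨y, hyC, hyV⟩
    obtain ⟨e, heT, hemin⟩ := Set.exists_min_image _ id (Set.toFinite _) hTne
    have heVi : e ∈ D.V (D.s + i) := hlex i (by omega) e ⟨heT, fun b hb => hemin b hb⟩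
    have hW1 : MyAux.Wset D (i + 1) = M.closure ((D.U D.s)ᶜ) ∩ D.V (D.s + i + 1) :=
      MyAux.Wset_pos D (by omega)
    have hsub : MyAux.Wset D (i + 1) ⊆ MyAux.Wset D i := by
      rcases Nat.eq_zero_or_pos i with h0 | h0
      · subst h0; rw [hW1, MyAux.Wset_zero]; exact Set.inter_subset_left
      · rw [hW1, MyAux.Wset_pos D (by omega : i ≠ 0)]
        refine Set.inter_subset_inter_right _ ?_
        exact hVmono (D.s + i) 1 (by omega)
    have heW : e ∈ MyAux.Wset D i := by
      rcases Nat.eq_zero_or_pos i with h0 | h0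
      · subst h0; rw [MyAux.Wset_zero]; exact heT.1
      · rw [MyAux.Wset_pos D (by omega : i ≠ 0)]; exact ⟨heT.1, heVi⟩
    refine ⟨hsub, fun hcon => ?_⟩
    have := hcon heW
    rw [hW1] at this
    exact heT.2 this.2
  -- empty closure from looplessness
  have hcl0 : M.closure (∅ : Set (Fin N)) = ∅ := by
    refine Set.eq_empty_iff_forall_notMem.2 fun e he => ?_
    have h := (hloopless e).notMem_closure_diff_of_mem (Set.mem_singleton e)
    rw [Set.diff_self] at h
    exact h he
  -- flats
  have hWflat : ∀ i ≤ a, M.IsFlat (MyAux.Wset D i) := by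
    intro i hia
    rcases Nat.eq_zero_or_pos i with h0 | h0
    · subst h0; rw [MyAux.Wset_zero]; exact MyAux.flat_closure _
    rcases eq_or_lt_of_le hia with heq | hlt
    · subst heq
      rw [MyAux.Wset_pos D (by omega : i ≠ 0), hVempty, Set.inter_empty]
      exact hcl0 ▸ MyAux.flat_closure ∅
    · rw [MyAux.Wset_pos D (by omega : i ≠ 0)]
      exact MyAux.flat_inter (MyAux.flat_closure _)
        (D.biflat (D.s + i) (by omega) (by omega)).2.2.2.2
  -- rank drops by at least one at each step
  have hWE : ∀ i, MyAux.Wset D i ⊆ M.E := fun i => hsubE _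
  have hgstep : ∀ i < a, mrk M (MyAux.Wset D (i + 1)) < mrk M (MyAux.Wset D i) := by
    intro i hi
    exact MyAux.mrk_lt_of_flat_ssubset (hWflat (i + 1) (by omega)) (hWstrict i hi) (hWE i)
  have hga : mrk M (MyAux.Wset D a) = 0 := by
    rw [MyAux.Wset_pos D (by omega : a ≠ 0), hVempty, Set.inter_empty, MyAux.mrk_empty]
  have hg0 : mrk M (MyAux.Wset D 0) = a := by rw [MyAux.Wset_zero]; exact ha.symm
  have hkey : ∀ k i, i + k ≤ a → mrk M (MyAux.Wset D (i + k)) + k ≤ mrk M (MyAux.Wset D i) := by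
    intro k
    induction k with
    | zero => intro i _; simp
    | succ k ih =>
      intro i h
      have h1 := hgstep (i + k) (by omega)
      have h2 := ih i (by omega)
      have : i + (k + 1) = (i + k) + 1 := by omega
      rw [this]
      omega
  have hgval : ∀ i ≤ a, mrk M (MyAux.Wset D i) = a - i := by
    intro i hia
    have h1 := hkey i 0 (by omega)
    have h2 := hkey (a - i) i (by omega)
    rw [Nat.zero_add, hg0] at h1
    have e2 : i + (a - i) = a := by omega
    rw [e2, hga] at h2
    omega
  refine ⟨by rw [hVempty, Set.inter_empty], ?_, ?_, ?_⟩
  · intro i h1 h2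
    have hW : MyAux.Wset D i = M.closure ((D.U D.s)ᶜ) ∩ D.V (D.s + i) :=
      MyAux.Wset_pos D (by omega)
    constructor
    · have := hWflat i h2; rwa [hW] at this
    · have := hgval i h2; rwa [hW] at this
  · intro i h1 h2
    have := hWstrict i h2
    rwa [MyAux.Wset_pos D (by omega : i + 1 ≠ 0), MyAux.Wset_pos D (by omega : i ≠ 0)] at this
  · have := hWstrict 0 (by omega)
    rwa [MyAux.Wset_pos D (by omega : (0:ℕ) + 1 ≠ 0), MyAux.Wset_zero] at this
end

section
/- Let M be a loopless matroid on [N] and let S|F < T|G and S|F < T'|G' be two distinct lexicographically decreasing biflags of M with the same first component S|F and second components of the same length ℓ. Then the sets pos(S|F < T|G) and pos(S|F < T'|G') are disjoint, and the sets neg(S|F < T|G) and neg(S|F < T'|G') are disjoint. -/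
/-- A proper biflat of `M`: a pair `S|F` with `S ∪ F = [N]`, `S ∩ F ≠ [N]`, both parts
nonempty, and `F` a flat of `M`. -/
def ProperBiflat {N : ℕ} (M : Matroid (Fin N)) (p : Set (Fin N) × Set (Fin N)) : Prop :=
  p.1 ∪ p.2 = Set.univ ∧ p.1 ∩ p.2 ≠ Set.univ ∧ p.1.Nonempty ∧ p.2.Nonempty ∧ M.IsFlat p.2

/-- The strict order on bisubsets: `S|T < S'|T'` iff `S ⊆ S'`, `T ⊇ T'` and `S|T ≠ S'|T'`. -/
def bflt {N : ℕ} (p q : Set (Fin N) × Set (Fin N)) : Prop :=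
  p.1 ⊆ q.1 ∧ q.2 ⊆ p.2 ∧ p ≠ q

/-- The first component `S|F` of a biflag: a strict chain of proper biflats
`S_1|F_1 < ⋯ < S_s|F_s` with the convention `S_0|F_0 = ∅|[N]` and no gap index below `s`. -/
structure FirstComp (N : ℕ) (M : Matroid (Fin N)) where
  s : ℕ
  U : ℕ → Set (Fin N)
  V : ℕ → Set (Fin N)
  conv_zero : U 0 = ∅ ∧ V 0 = Set.univ
  biflat : ∀ i, 1 ≤ i → i ≤ s → ProperBiflat M (U i, V i)
  chain : ∀ i, i < s → bflt (U i, V i) (U (i + 1), V (i + 1))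
  min_gap : ∀ j, j < s → U j ∪ V (j + 1) = Set.univ

/-- The full chain obtained from a first component `C` and a second component `L`, together
with the terminal convention `[N]|∅`. -/
def fullChain {N : ℕ} {M : Matroid (Fin N)} (C : FirstComp N M)
    (L : List (Set (Fin N) × Set (Fin N))) : List (Set (Fin N) × Set (Fin N)) :=
  ((List.range (C.s + 1)).map fun i => (C.U i, C.V i)) ++ L ++ [(Set.univ, ∅)]

/-- The `i`-th entry `T_i|G_i` of the second component (with conventions
`T_0|G_0 = S_s|F_s` and `T_{ℓ+1}|G_{ℓ+1} = [N]|∅`). -/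
def ent {N : ℕ} {M : Matroid (Fin N)} (C : FirstComp N M)
    (L : List (Set (Fin N) × Set (Fin N))) (i : ℕ) : Set (Fin N) × Set (Fin N) :=
  (fullChain C L).getD (C.s + i) (Set.univ, ∅)

/-- `C` together with second component `L` is a biflag whose smallest gap index is `s`:
all entries of `L` are proper biflats, the full chain is strictly increasing, the index `s`
is a gap index, and no smaller index is. -/
def IsBiflag {N : ℕ} {M : Matroid (Fin N)} (C : FirstComp N M)
    (L : List (Set (Fin N) × Set (Fin N))) : Prop :=
  (∀ p ∈ L, ProperBiflat M p) ∧ List.Chain' bflt (fullChain C L) ∧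
    C.U C.s ∪ (ent C L 1).2 ≠ Set.univ

/-- The biflag `(C, L)` is lexicographically decreasing: for each `0 ≤ i ≤ ℓ`,
`min(cl(S_s^c) ∖ G_{i+1}) ∈ G_i`. -/
def LexDec {N : ℕ} {M : Matroid (Fin N)} (C : FirstComp N M)
    (L : List (Set (Fin N) × Set (Fin N))) : Prop :=
  ∀ i ≤ L.length, ∀ e : Fin N,
    IsLeast (M.closure ((C.U C.s)ᶜ) \ (ent C L (i + 1)).2) e → e ∈ (ent C L i).2

/-- `FirstBad C L i e`: `i` is the smallest index `1 ≤ i ≤ ℓ+1` with `rk(T_i^c) < a − ℓ`, and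
`e = min(cl(S_s^c) ∖ G_i)`, where `a = rk(cl(S_s^c))`. -/
def FirstBad {N : ℕ} {M : Matroid (Fin N)} (C : FirstComp N M)
    (L : List (Set (Fin N) × Set (Fin N))) (i : ℕ) (e : Fin N) : Prop :=
  1 ≤ i ∧ i ≤ L.length + 1 ∧
    mrk M ((ent C L i).1ᶜ) < mrk M (M.closure ((C.U C.s)ᶜ)) - L.length ∧
    (∀ i', 1 ≤ i' → i' < i →
      mrk M (M.closure ((C.U C.s)ᶜ)) - L.length ≤ mrk M ((ent C L i').1ᶜ)) ∧
    IsLeast (M.closure ((C.U C.s)ᶜ) \ (ent C L i).2) e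

/-- The set `pos(S|F < T|G)`: biflags obtained by inserting a proper biflat `U|H` with
`rk(U^c) < a − ℓ` and `e ∈ H ≠ [N]` into the chain (indexing the nonzero monomials in the
positive part of the canonical expansion). -/
def posSet {N : ℕ} {M : Matroid (Fin N)} (C : FirstComp N M)
    (L : List (Set (Fin N) × Set (Fin N))) : Set (List (Set (Fin N) × Set (Fin N))) :=
  {L' | ∃ i e p, FirstBad C L i e ∧ ProperBiflat M p ∧
    mrk M (p.1ᶜ) < mrk M (M.closure ((C.U C.s)ᶜ)) - L.length ∧
    e ∈ p.2 ∧ p.2 ≠ Set.univ ∧ L' = L.insertIdx (i - 1) p ∧ IsBiflag C L'}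

/-- The set `neg(S|F < T|G)`: biflags obtained by inserting a proper biflat `U|H` with
`rk(U^c) ≥ a − ℓ` and `e ∉ H` into the chain. -/
def negSet {N : ℕ} {M : Matroid (Fin N)} (C : FirstComp N M)
    (L : List (Set (Fin N) × Set (Fin N))) : Set (List (Set (Fin N) × Set (Fin N))) :=
  {L' | ∃ i e p, FirstBad C L i e ∧ ProperBiflat M p ∧
    mrk M (M.closure ((C.U C.s)ᶜ)) - L.length ≤ mrk M (p.1ᶜ) ∧
    e ∉ p.2 ∧ L' = L.insertIdx (i - 1) p ∧ IsBiflag C L'}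

section AuxLemmas

variable {N : ℕ} {M : Matroid (Fin N)} (C : FirstComp N M)

lemma ent_eq_getElem (L : List (Set (Fin N) × Set (Fin N))) (j : ℕ) (h1 : 1 ≤ j)
    (h2 : j - 1 < L.length) : ent C L j = L[j-1]'h2 := by
  unfold ent fullChain
  rw [List.append_assoc]
  have hA : (((List.range (C.s + 1)).map fun i => (C.U i, C.V i))).length = C.s + 1 := by simp
  rw [List.getD_eq_getElem?_getD, List.getElem?_append_right (by omega : _ ≤ C.s + j)]
  rw [hA]
  have : C.s + j - (C.s + 1) = j - 1 := by omega
  rw [this, List.getElem?_append_left h2, List.getElem?_eq_getElem h2, Option.getD_some]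

lemma ent_last (L : List (Set (Fin N) × Set (Fin N))) :
    ent C L (L.length + 1) = ((Set.univ : Set (Fin N)), (∅ : Set (Fin N))) := by
  unfold ent fullChain
  rw [List.append_assoc]
  have hA : (((List.range (C.s + 1)).map fun i => (C.U i, C.V i))).length = C.s + 1 := by simp
  rw [List.getD_eq_getElem?_getD, List.getElem?_append_right (by omega : _ ≤ _)]
  rw [hA]
  have : C.s + (L.length + 1) - (C.s + 1) = L.length := by omega
  rw [this, List.getElem?_append_right (le_refl _), Nat.sub_self]
  simp

lemma ent_insert_lt (L : List (Set (Fin N) × Set (Fin N))) (i : ℕ)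
    (p : Set (Fin N) × Set (Fin N)) (j : ℕ) (hj1 : 1 ≤ j) (hji : j < i)
    (hi : i ≤ L.length + 1) :
    ent C (L.insertIdx (i-1) p) j = ent C L j := by
  have hlen : (L.insertIdx (i-1) p).length = L.length + 1 :=
    List.length_insertIdx_of_le_length (by omega) _
  rw [ent_eq_getElem C _ j hj1 (by omega), ent_eq_getElem C L j hj1 (by omega)]
  exact List.getElem_insertIdx_of_lt (l := L) (x := p) (i := i-1) (j := j-1) (by omega) (by omega)

lemma ent_insert_self (L : List (Set (Fin N) × Set (Fin N))) (i : ℕ)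
    (p : Set (Fin N) × Set (Fin N)) (hi1 : 1 ≤ i) (hi2 : i ≤ L.length + 1) :
    ent C (L.insertIdx (i-1) p) i = p := by
  have hlen : (L.insertIdx (i-1) p).length = L.length + 1 :=
    List.length_insertIdx_of_le_length (by omega) _
  rw [ent_eq_getElem C _ i hi1 (by omega)]
  exact List.getElem_insertIdx_self (l := L) (x := p) (i := i-1) (by omega)

lemma ent_insert_succ (L : List (Set (Fin N) × Set (Fin N))) (i : ℕ)
    (p : Set (Fin N) × Set (Fin N)) (hi1 : 1 ≤ i) (hi2 : i ≤ L.length) :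
    ent C (L.insertIdx (i-1) p) (i+1) = ent C L i := by
  have hlen : (L.insertIdx (i-1) p).length = L.length + 1 :=
    List.length_insertIdx_of_le_length (by omega) _
  rw [ent_eq_getElem C _ (i+1) (by omega) (by omega), ent_eq_getElem C L i hi1 (by omega)]
  have := List.getElem_insertIdx_add_succ L p (i-1) 0 (by omega)
    (by rw [hlen]; omega)
  convert this using 2 <;> omega

/-- In the chain obtained by inserting `p` (of small corank) at position `i-1`, index `i` is
the smallest index with small corank. -/
lemma pos_key (L : List (Set (Fin N) × Set (Fin N))) (i : ℕ) (e : Fin N)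
    (p : Set (Fin N) × Set (Fin N)) (hfb : FirstBad C L i e)
    (hp : mrk M (p.1ᶜ) < mrk M (M.closure ((C.U C.s)ᶜ)) - L.length) :
    mrk M ((ent C (L.insertIdx (i-1) p) i).1ᶜ) < mrk M (M.closure ((C.U C.s)ᶜ)) - L.length ∧
    ∀ j, 1 ≤ j → j < i → mrk M (M.closure ((C.U C.s)ᶜ)) - L.length ≤
      mrk M ((ent C (L.insertIdx (i-1) p) j).1ᶜ) := by
  obtain ⟨hi1, hi2, _, hmin, _⟩ := hfb
  refine ⟨?_, fun j hj1 hji => ?_⟩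
  · rw [ent_insert_self C L i p hi1 hi2]; exact hp
  · rw [ent_insert_lt C L i p j hj1 hji hi2]; exact hmin j hj1 hji

/-- In the chain obtained by inserting `p` (of large corank) at position `i-1`, index `i+1` is
the smallest index with small corank. -/
lemma neg_key (L : List (Set (Fin N) × Set (Fin N))) (i : ℕ) (e : Fin N)
    (p : Set (Fin N) × Set (Fin N)) (hfb : FirstBad C L i e)
    (hp : mrk M (M.closure ((C.U C.s)ᶜ)) - L.length ≤ mrk M (p.1ᶜ)) :
    mrk M ((ent C (L.insertIdx (i-1) p) (i+1)).1ᶜ) <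
      mrk M (M.closure ((C.U C.s)ᶜ)) - L.length ∧
    ∀ j, 1 ≤ j → j < i + 1 → mrk M (M.closure ((C.U C.s)ᶜ)) - L.length ≤
      mrk M ((ent C (L.insertIdx (i-1) p) j).1ᶜ) := by
  obtain ⟨hi1, hi2, hrk, hmin, _⟩ := hfb
  constructor
  · rcases Nat.lt_or_ge i (L.length + 1) with h | h
    · rw [ent_insert_succ C L i p hi1 (by omega)]; exact hrk
    · have hieq : i = L.length + 1 := by omega
      have hlen : (L.insertIdx (i-1) p).length = L.length + 1 :=
        List.length_insertIdx_of_le_length (by omega) _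
      have h1 : ent C (L.insertIdx (i-1) p) (i+1) =
          ((Set.univ : Set (Fin N)), (∅ : Set (Fin N))) := by
        have := ent_last C (L.insertIdx (i-1) p)
        rw [hlen] at this
        rw [show i + 1 = L.length + 1 + 1 from by omega]
        exact this
      have h2 : ent C L i = ((Set.univ : Set (Fin N)), (∅ : Set (Fin N))) := by
        rw [hieq]; exact ent_last C L
      rw [h1, ← h2]; exact hrk
  · intro j hj1 hji
    rcases Nat.lt_or_ge j i with h | h
    · rw [ent_insert_lt C L i p j hj1 h hi2]; exact hmin j hj1 h
    · have : j = i := by omega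
      rw [this, ent_insert_self C L i p hi1 hi2]; exact hp

end AuxLemmas

/-- For two distinct lexicographically decreasing biflags of a loopless
matroid `M` with the same first component and second components of the same length, the sets
`pos(·)` are disjoint, and the sets `neg(·)` are disjoint. -/
theorem stmt12 {N : ℕ} (M : Matroid (Fin N)) (hE : M.E = Set.univ)
    (hloopless : ∀ e : Fin N, M.Indep {e})
    (C : FirstComp N M) (L L' : List (Set (Fin N) × Set (Fin N)))
    (hL : IsBiflag C L) (hL' : IsBiflag C L')
    (hlex : LexDec C L) (hlex' : LexDec C L')
    (hlen : L.length = L'.length) (hne : L ≠ L') :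
    Disjoint (posSet C L) (posSet C L') ∧ Disjoint (negSet C L) (negSet C L') := by
  constructor
  · rw [Set.disjoint_left]
    rintro L'' ⟨i, e, p, hfb, _, hrk, _, _, hins, _⟩ ⟨i', e', p', hfb', _, hrk', _, _, hins', _⟩
    obtain ⟨k1, k2⟩ := pos_key C L i e p hfb hrk
    obtain ⟨k1', k2'⟩ := pos_key C L' i' e' p' hfb' hrk'
    rw [← hins] at k1 k2
    rw [← hins'] at k1' k2'
    rw [hlen] at k1 k2
    have hii : i = i' := by
      rcases lt_trichotomy i i' with h | h | h
      · exact absurd k1 (not_lt.2 (k2' i hfb.1 h))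
      · exact h
      · exact absurd k1' (not_lt.2 (k2 i' hfb'.1 h))
    refine hne ?_
    have e1 : L = L''.eraseIdx (i-1) := by rw [hins, List.eraseIdx_insertIdx_self]
    have e2 : L' = L''.eraseIdx (i'-1) := by rw [hins', List.eraseIdx_insertIdx_self]
    rw [e1, e2, hii]
  · rw [Set.disjoint_left]
    rintro L'' ⟨i, e, p, hfb, _, hrk, _, hins, _⟩ ⟨i', e', p', hfb', _, hrk', _, hins', _⟩
    obtain ⟨k1, k2⟩ := neg_key C L i e p hfb hrk
    obtain ⟨k1', k2'⟩ := neg_key C L' i' e' p' hfb' hrk'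
    rw [← hins] at k1 k2
    rw [← hins'] at k1' k2'
    rw [hlen] at k1 k2
    have hii : i = i' := by
      rcases lt_trichotomy i i' with h | h | h
      · exact absurd k1 (not_lt.2 (k2' (i+1) (by omega) (by omega)))
      · exact h
      · exact absurd k1' (not_lt.2 (k2 (i'+1) (by omega) (by omega)))
    refine hne ?_
    have e1 : L = L''.eraseIdx (i-1) := by rw [hins, List.eraseIdx_insertIdx_self]
    have e2 : L' = L''.eraseIdx (i'-1) := by rw [hins', List.eraseIdx_insertIdx_self]
    rw [e1, e2, hii]
end

section
/- Let M be a loopless matroid on [N]. The biflags of M (chains of proper biflats of M possessing a gap index) form an abstract simplicial complex: any nonempty subchain of a biflag is a biflag. Equivalently, if a chain C of proper biflats of M has a gap index, then every subchain C' ⊆ C has a gap index. -/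
/-- The chain `L` padded with the conventions `S_0|T_0 = ∅|[N]` and
`S_{ℓ+1}|T_{ℓ+1} = [N]|∅`. -/
def padded {N : ℕ} (L : List (Set (Fin N) × Set (Fin N))) :
    List (Set (Fin N) × Set (Fin N)) :=
  ((∅ : Set (Fin N)), (Set.univ : Set (Fin N))) :: L ++ [(Set.univ, ∅)]

/-- A chain `L` has a gap index: some `0 ≤ j ≤ ℓ` with `S_j ∪ T_{j+1} ≠ [N]` (using the padding
conventions). -/
def HasGap {N : ℕ} (L : List (Set (Fin N) × Set (Fin N))) : Prop :=
  ∃ j ≤ L.length,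
    ((padded L).getD j (Set.univ, ∅)).1 ∪ ((padded L).getD (j + 1) (Set.univ, ∅)).2 ≠ Set.univ

def rwk {N : ℕ} (p q : Set (Fin N) × Set (Fin N)) : Prop :=
  p.1 ⊆ q.1 ∧ q.2 ⊆ p.2

lemma padded_pairwise {N : ℕ} {C : List (Set (Fin N) × Set (Fin N))}
    (hchain : List.Chain' bflt C) : (padded C).Pairwise rwk := by
  haveI : IsTrans _ (@rwk N) := ⟨fun a b c hab hbc => ⟨hab.1.trans hbc.1, hbc.2.trans hab.2⟩⟩
  rw [← List.isChain_iff_pairwise]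
  unfold padded
  refine List.isChain_cons.2 ⟨fun y _ => ⟨Set.empty_subset _, Set.subset_univ _⟩, ?_⟩
  refine List.isChain_append.2 ⟨hchain.imp (fun a b h => ⟨h.1, h.2.1⟩), List.isChain_singleton _, ?_⟩
  intro x _ y hy
  simp at hy
  subst hy
  exact ⟨Set.subset_univ _, Set.empty_subset _⟩

lemma rwk_of_le {N : ℕ} {P : List (Set (Fin N) × Set (Fin N))} (hpair : P.Pairwise rwk)
    (a b : Fin P.length) (hab : (a : ℕ) ≤ (b : ℕ)) : rwk (P.get a) (P.get b) := by
  rcases eq_or_lt_of_le hab with h | h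
  · have : a = b := Fin.ext h
    subst this; exact ⟨subset_rfl, subset_rfl⟩
  · exact List.pairwise_iff_get.mp hpair a b h

/-- Biflags of a loopless matroid form an abstract simplicial complex: if a
strict chain `C` of proper biflats of `M` has a gap index, then every subchain `C' ⊆ C` has a
gap index (and hence is again a biflag). -/
theorem stmt19 {N : ℕ} (M : Matroid (Fin N)) (hE : M.E = Set.univ)
    (hloopless : ∀ e : Fin N, M.Indep {e})
    (C : List (Set (Fin N) × Set (Fin N)))
    (hbiflat : ∀ p ∈ C, ProperBiflat M p)
    (hchain : List.Chain' bflt C)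
    (hgap : HasGap C) :
    ∀ C' : List (Set (Fin N) × Set (Fin N)), C'.Sublist C → HasGap C' := by
  unfold HasGap at hgap ⊢
  intro C' hsub
  obtain ⟨j, hj, hgapj⟩ := hgap
  have hsub' : (padded C').Sublist (padded C) := by
    unfold padded
    exact (hsub.append (List.Sublist.refl _)).cons₂ _
  obtain ⟨f, hf⟩ := List.sublist_iff_exists_fin_orderEmbedding_get_eq.mp hsub'
  have hPlen : (padded C).length = C.length + 2 := by simp [padded]
  have hP'len : (padded C').length = C'.length + 2 := by simp [padded]
  have hjlt : j < (padded C).length := by omega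
  have hj1lt : j + 1 < (padded C).length := by omega
  have hpair := padded_pairwise hchain
  -- the contradiction helper: if P'[i].1 ⊆ P[j].1 and P'[i+1].2 ⊆ P[j+1].2 and i ≤ C'.length, done
  have key : ∀ i : ℕ, ∀ hi : i < (padded C').length, ∀ hi1 : i + 1 < (padded C').length,
      ((padded C').get ⟨i, hi⟩).1 ⊆ ((padded C).get ⟨j, hjlt⟩).1 →
      ((padded C').get ⟨i+1, hi1⟩).2 ⊆ ((padded C).get ⟨j+1, hj1lt⟩).2 →
      ∃ k ≤ C'.length,
      ((padded C').getD k (Set.univ, ∅)).1 ∪ ((padded C').getD (k + 1) (Set.univ, ∅)).2 ≠ Set.univ := by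
    intro i hi hi1 h1 h2
    refine ⟨i, by omega, ?_⟩
    rw [List.getD_eq_getElem _ _ hi, List.getD_eq_getElem _ _ hi1]
    intro heq
    apply hgapj
    rw [List.getD_eq_getElem _ _ hjlt, List.getD_eq_getElem _ _ hj1lt]
    apply Set.eq_univ_of_univ_subset
    rw [← heq]
    exact Set.union_subset_union h1 h2
  classical
  set s : Finset (Fin (padded C').length) :=
    Finset.univ.filter (fun i => ((f i : ℕ)) ≤ j) with hs
  by_cases hne : s.Nonempty
  · set i := s.max' hne with hidef
    have hif : (f i : ℕ) ≤ j := by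
      have hm := s.max'_mem hne
      exact (Finset.mem_filter.mp hm).2
    by_cases hlast : (i : ℕ) + 1 < (padded C').length
    · have hnotmem : (⟨(i : ℕ) + 1, hlast⟩ : Fin (padded C').length) ∉ s := by
        intro hmem
        have hle := s.le_max' _ hmem
        rw [← hidef] at hle
        have : ((⟨(i : ℕ) + 1, hlast⟩ : Fin (padded C').length) : ℕ) ≤ (i : ℕ) := hle
        simp at this
      have hfgt : j + 1 ≤ (f ⟨(i : ℕ) + 1, hlast⟩ : ℕ) := by
        have : ¬ ((f (⟨(i : ℕ) + 1, hlast⟩ : Fin (padded C').length)) : ℕ) ≤ j := by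
          intro hc
          exact hnotmem (Finset.mem_filter.mpr ⟨Finset.mem_univ _, hc⟩)
        omega
      refine key i i.isLt hlast ?_ ?_
      · have := hf i
        rw [Fin.eta, this]
        exact (rwk_of_le hpair (f i) ⟨j, hjlt⟩ hif).1
      · rw [hf ⟨(i : ℕ) + 1, hlast⟩]
        exact (rwk_of_le hpair ⟨j+1, hj1lt⟩ (f ⟨(i : ℕ) + 1, hlast⟩) hfgt).2
    · -- i is the last index, so P'[i] = (univ, ∅) and P[f i].1 = univ ⊆ P[j].1 forces no gap
      exfalso
      have hieq : (i : ℕ) = C'.length + 1 := by have := i.isLt; omega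
      have hval : (padded C').get i = (Set.univ, ∅) := by
        show ((((∅ : Set (Fin N)), (Set.univ : Set (Fin N))) :: C') ++ [(Set.univ, ∅)])[(i : ℕ)]'(i.isLt) = (Set.univ, ∅)
        exact List.getElem_concat_length (by simp [hieq]) _
      apply hgapj
      rw [List.getD_eq_getElem _ _ hjlt, List.getD_eq_getElem _ _ hj1lt]
      have h1 : ((padded C').get i).1 ⊆ ((padded C).get ⟨j, hjlt⟩).1 := by
        rw [hf i]
        exact (rwk_of_le hpair (f i) ⟨j, hjlt⟩ hif).1
      rw [hval] at h1
      apply Set.eq_univ_of_univ_subset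
      exact (Set.univ_subset_iff.mpr (Set.eq_univ_of_univ_subset h1)).trans Set.subset_union_left
  · -- no index maps ≤ j: then f 1 ≥ j + 1, use k = 0
    have h0lt : 0 < (padded C').length := by omega
    have h1lt : 1 < (padded C').length := by omega
    have hfgt : j + 1 ≤ (f ⟨1, h1lt⟩ : ℕ) := by
      have hnm : ¬ ((f (⟨1, h1lt⟩ : Fin (padded C').length)) : ℕ) ≤ j := by
        intro hc
        exact hne ⟨_, Finset.mem_filter.mpr ⟨Finset.mem_univ _, hc⟩⟩
      omega
    refine key 0 h0lt h1lt ?_ ?_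
    · have : ((padded C').get ⟨0, h0lt⟩).1 = (∅ : Set (Fin N)) := by
        simp [padded]
      rw [this]
      exact Set.empty_subset _
    · rw [hf ⟨1, h1lt⟩]
      exact (rwk_of_le hpair ⟨j+1, hj1lt⟩ (f ⟨1, h1lt⟩) hfgt).2
end
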